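/- arXiv:2602.08490 — 3 statements merged into one kernel-verified Lean document; each statement's English description precedes it below -/
import Mathlib

section
/- Let N ≥ 1, λ ∈ (0, N) and θ > 0 with θ + λ > N. If θ < N, then the integral ∫_{ℝ^N} |x−y|^{−λ} ⟨y⟩^{−θ} dy is bounded above and below by constant multiples of ⟨x⟩^{N−λ−θ}, where ⟨y⟩ = (1+|y|²)^{1/2}. -/
/-!
Write `M = ⟨x⟩` and split the integral according to `|x - y|`. Where `|x - y| < M/2` the
bracket satisfies `⟨y⟩ > M/2`, which leaves the locally integrable kernel `|x - y|^{-λ}` on a ball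
of radius `M/2`. Where `M/2 ≤ |x - y| < 2M` the kernel is at most `(M/2)^{-λ}` and
`⟨y⟩^{-θ} ≤ |y|^{-θ}` is integrated over the ball of radius `3M`, which is finite as `θ < N`.
Where `|x - y| ≥ 2M` we have `⟨y⟩ ≥ |x - y|/2`, which leaves `|x - y|^{-λ-θ}` outside a ball,
integrable as `λ + θ > N`. By scaling, each piece is a constant times `M^{N-λ-θ}`.
Conversely the integrand is at least `M^{-λ} (2M)^{-θ}` on the ball of radius `M` around `x`.
-/

open MeasureTheory Metric Set Module

noncomputable def japaneseBracket {E : Type*} [SeminormedAddCommGroup E] (x : E) : ℝ :=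
  √(1 + ‖x‖ ^ 2)

section JapaneseBracket

variable {E : Type*} [SeminormedAddCommGroup E]

lemma japaneseBracket_pos (x : E) : 0 < japaneseBracket x :=
  Real.sqrt_pos.mpr (by positivity)

lemma one_le_japaneseBracket (x : E) : 1 ≤ japaneseBracket x :=
  Real.one_le_sqrt.mpr (by simp)

lemma norm_le_japaneseBracket (x : E) : ‖x‖ ≤ japaneseBracket x := by
  simpa [japaneseBracket] using Real.abs_le_sqrt (x := ‖x‖) (by linarith)

lemma japaneseBracket_le_add_norm_sub (x y : E) :
    japaneseBracket x ≤ japaneseBracket y + ‖x - y‖ := by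
  have hxy : ‖x‖ ≤ ‖y‖ + ‖x - y‖ := norm_le_insert' x y
  have hy := norm_le_japaneseBracket y
  have hy2 : japaneseBracket y ^ 2 = 1 + ‖y‖ ^ 2 := Real.sq_sqrt (by positivity)
  refine Real.sqrt_le_iff.mpr ⟨by positivity [japaneseBracket_pos y], ?_⟩
  nlinarith [pow_le_pow_left₀ (norm_nonneg x) hxy 2,
    mul_le_mul_of_nonneg_right hy (norm_nonneg (x - y))]

lemma japaneseBracket_le_sqrt_two_mul_norm {x : E} (hx : 1 ≤ ‖x‖) :
    japaneseBracket x ≤ √2 * ‖x‖ := by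
  refine Real.sqrt_le_iff.mpr ⟨by positivity, ?_⟩
  rw [mul_pow, Real.sq_sqrt zero_le_two]
  nlinarith

@[fun_prop]
lemma continuous_japaneseBracket : Continuous (japaneseBracket : E → ℝ) := by
  unfold japaneseBracket
  fun_prop

lemma one_add_norm_sq_rpow_div_two (x : E) (t : ℝ) :
    (1 + ‖x‖ ^ 2) ^ (t / 2) = japaneseBracket x ^ t :=
  Real.rpow_div_two_eq_sqrt t (by positivity)

end JapaneseBracket

section RadialPower

open scoped Pointwise

lemma smul_compl_unitBall_of_pos {E : Type*} [NormedAddCommGroup E] [NormedSpace ℝ E] {r : ℝ}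
    (hr : 0 < r) : r • (ball (0 : E) 1)ᶜ = (ball (0 : E) r)ᶜ := by
  ext y
  simp [Set.mem_smul_set_iff_inv_smul_mem₀ hr.ne', norm_smul, abs_of_pos hr,
    inv_mul_lt_iff₀ hr]

variable {E : Type*} [NormedAddCommGroup E] [NormedSpace ℝ E] [MeasurableSpace E] [BorelSpace E]
  [FiniteDimensional ℝ E] (μ : Measure E) [μ.IsAddHaarMeasure]

lemma setIntegral_smul_set_norm_rpow_neg (s : Set E) {r : ℝ} (hr : 0 < r) (t : ℝ) :
    ∫ y in r • s, ‖y‖ ^ (-t) ∂μ = r ^ ((finrank ℝ E : ℝ) - t) * ∫ y in s, ‖y‖ ^ (-t) ∂μ := by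
  have h := Measure.setIntegral_comp_smul_of_pos μ (fun y : E ↦ ‖y‖ ^ (-t)) s hr
  simp only [norm_smul, Real.norm_of_nonneg hr.le, Real.mul_rpow hr.le (norm_nonneg _),
    integral_const_mul, smul_eq_mul] at h
  rw [sub_eq_add_neg, Real.rpow_add hr, Real.rpow_natCast, mul_assoc, h, ← mul_assoc,
    mul_inv_cancel₀ (pow_pos hr _).ne', one_mul]

lemma setIntegral_ball_norm_rpow_neg {r : ℝ} (hr : 0 < r) (t : ℝ) :
    ∫ y in ball (0 : E) r, ‖y‖ ^ (-t) ∂μ =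
      r ^ ((finrank ℝ E : ℝ) - t) * ∫ y in ball (0 : E) 1, ‖y‖ ^ (-t) ∂μ := by
  rw [← setIntegral_smul_set_norm_rpow_neg μ _ hr, smul_unitBall_of_pos hr]

lemma setIntegral_compl_ball_norm_rpow_neg {r : ℝ} (hr : 0 < r) (t : ℝ) :
    ∫ y in (ball (0 : E) r)ᶜ, ‖y‖ ^ (-t) ∂μ =
      r ^ ((finrank ℝ E : ℝ) - t) * ∫ y in (ball (0 : E) 1)ᶜ, ‖y‖ ^ (-t) ∂μ := by
  rw [← setIntegral_smul_set_norm_rpow_neg μ _ hr, smul_compl_unitBall_of_pos hr]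

lemma integrableOn_ball_norm_rpow_neg [Nontrivial E] (r : ℝ) {t : ℝ} (ht : t < finrank ℝ E) :
    IntegrableOn (fun y : E ↦ ‖y‖ ^ (-t)) (ball 0 r) μ := by
  refine integrableOn_ball_of_norm_le_rpow finrank_pos ht (C := 1) (ae_of_all _ fun y ↦ ?_)
    (measurable_norm.pow_const _).aestronglyMeasurable
  simp [abs_of_nonneg (Real.rpow_nonneg (norm_nonneg y) _)]

lemma integrableOn_compl_ball_norm_rpow_neg {r t : ℝ} (hr : 1 ≤ r) (ht : finrank ℝ E < t) :
    IntegrableOn (fun y : E ↦ ‖y‖ ^ (-t)) (ball 0 r)ᶜ μ := by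
  have hbracket : Integrable (fun y : E ↦ √2 ^ t * japaneseBracket y ^ (-t)) μ := by
    simp_rw [← one_add_norm_sq_rpow_div_two]
    exact (integrable_rpow_neg_one_add_norm_sq ht).const_mul _
  refine hbracket.integrableOn.mono' (measurable_norm.pow_const _).aestronglyMeasurable
    ((ae_restrict_iff' measurableSet_ball.compl).mpr (ae_of_all _ fun y hy ↦ ?_))
  have hy : 1 ≤ ‖y‖ := hr.trans (by simpa using hy)
  have ht0 : 0 ≤ t := (Nat.cast_nonneg _).trans ht.le
  rw [Real.norm_of_nonneg (by positivity)]
  calc ‖y‖ ^ (-t) = √2 ^ t * (√2 * ‖y‖) ^ (-t) := by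
        rw [Real.mul_rpow (by positivity) (by positivity), ← mul_assoc,
          ← Real.rpow_add (by positivity), add_neg_cancel, Real.rpow_zero, one_mul]
    _ ≤ √2 ^ t * japaneseBracket y ^ (-t) := by
        refine mul_le_mul_of_nonneg_left ?_ (by positivity)
        exact Real.rpow_le_rpow_of_nonpos (japaneseBracket_pos y)
          (japaneseBracket_le_sqrt_two_mul_norm hy) (neg_nonpos.mpr ht0)

end RadialPower

section Domination

variable {E : Type*} [NormedAddCommGroup E] {lam θ : ℝ}

lemma norm_sub_rpow_mul_japaneseBracket_rpow_le (hlam : 0 ≤ lam) (hθ : 0 ≤ θ) (x : E) {y : E}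
    (hy : y ≠ 0) :
    ‖x - y‖ ^ (-lam) * japaneseBracket y ^ (-θ) ≤
      (2⁻¹ * japaneseBracket x) ^ (-θ) *
          (ball 0 (2⁻¹ * japaneseBracket x)).indicator (fun z ↦ ‖z‖ ^ (-lam)) (x - y) +
        (2⁻¹ * japaneseBracket x) ^ (-lam) *
          (ball 0 (3 * japaneseBracket x)).indicator (fun z ↦ ‖z‖ ^ (-θ)) y +
        2 ^ θ *
          (ball 0 (2 * japaneseBracket x))ᶜ.indicator (fun z ↦ ‖z‖ ^ (-(lam + θ))) (x - y) := by
  set M := japaneseBracket x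
  have hM : 0 < 2⁻¹ * M := mul_pos (by norm_num) (japaneseBracket_pos x)
  have hxM : ‖x‖ ≤ M := norm_le_japaneseBracket x
  have hMy : M ≤ japaneseBracket y + ‖x - y‖ := japaneseBracket_le_add_norm_sub x y
  have hyy : ‖y‖ ≤ japaneseBracket y := norm_le_japaneseBracket y
  have hy_le : ‖y‖ ≤ ‖x‖ + ‖x - y‖ := by simpa [norm_sub_rev] using norm_le_insert' y x
  have hxy_le : ‖x - y‖ ≤ ‖x‖ + ‖y‖ := norm_sub_le x y
  have h₁ : 0 ≤ (2⁻¹ * M) ^ (-θ) *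
      (ball 0 (2⁻¹ * M)).indicator (fun z ↦ ‖z‖ ^ (-lam)) (x - y) :=
    mul_nonneg (by positivity) (indicator_nonneg (fun _ _ ↦ by positivity) _)
  have h₂ : 0 ≤ (2⁻¹ * M) ^ (-lam) * (ball 0 (3 * M)).indicator (fun z ↦ ‖z‖ ^ (-θ)) y :=
    mul_nonneg (by positivity) (indicator_nonneg (fun _ _ ↦ by positivity) _)
  have h₃ : 0 ≤ 2 ^ θ * (ball 0 (2 * M))ᶜ.indicator (fun z ↦ ‖z‖ ^ (-(lam + θ))) (x - y) :=
    mul_nonneg (by positivity) (indicator_nonneg (fun _ _ ↦ by positivity) _)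
  rcases lt_or_ge ‖x - y‖ (2⁻¹ * M) with hnear | hmid
  · have hbound : ‖x - y‖ ^ (-lam) * japaneseBracket y ^ (-θ) ≤ (2⁻¹ * M) ^ (-θ) *
        (ball 0 (2⁻¹ * M)).indicator (fun z ↦ ‖z‖ ^ (-lam)) (x - y) := by
      rw [indicator_of_mem (mem_ball_zero_iff.mpr hnear), mul_comm]
      exact mul_le_mul_of_nonneg_right
        (Real.rpow_le_rpow_of_nonpos hM (by linarith) (by linarith)) (by positivity)
    linarith
  rcases lt_or_ge ‖x - y‖ (2 * M) with hmid' | hfar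
  · have hbound : ‖x - y‖ ^ (-lam) * japaneseBracket y ^ (-θ) ≤ (2⁻¹ * M) ^ (-lam) *
        (ball 0 (3 * M)).indicator (fun z ↦ ‖z‖ ^ (-θ)) y := by
      rw [indicator_of_mem (mem_ball_zero_iff.mpr (by linarith : ‖y‖ < 3 * M))]
      exact mul_le_mul (Real.rpow_le_rpow_of_nonpos hM hmid (by linarith))
        (Real.rpow_le_rpow_of_nonpos (norm_pos_iff.mpr hy) hyy (by linarith))
        (Real.rpow_nonneg (japaneseBracket_pos y).le _) (Real.rpow_nonneg hM.le _)
    linarith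
  · have hpos : 0 < ‖x - y‖ := by linarith
    have hbound : ‖x - y‖ ^ (-lam) * japaneseBracket y ^ (-θ) ≤
        2 ^ θ * (ball 0 (2 * M))ᶜ.indicator (fun z ↦ ‖z‖ ^ (-(lam + θ))) (x - y) := by
      rw [indicator_of_mem (by simpa using hfar)]
      calc ‖x - y‖ ^ (-lam) * japaneseBracket y ^ (-θ)
          ≤ ‖x - y‖ ^ (-lam) * (2⁻¹ * ‖x - y‖) ^ (-θ) :=
            mul_le_mul_of_nonneg_left (Real.rpow_le_rpow_of_nonpos (by positivity)
              (by linarith) (by linarith)) (by positivity)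
        _ = 2 ^ θ * ‖x - y‖ ^ (-(lam + θ)) := by
            rw [Real.mul_rpow (by norm_num) hpos.le, Real.inv_rpow zero_le_two,
              ← Real.rpow_neg zero_le_two, neg_neg, neg_add, Real.rpow_add hpos]
            ring
    linarith

end Domination

lemma mul_rpow_mul_mul_rpow {a b M p q e : ℝ} (ha : 0 ≤ a) (hb : 0 ≤ b) (hM : 0 < M)
    (hpq : p + q = e) : (a * M) ^ p * (b * M) ^ q = a ^ p * b ^ q * M ^ e := by
  rw [Real.mul_rpow ha hM.le, Real.mul_rpow hb hM.le, ← hpq, Real.rpow_add hM]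
  ring

section UpperBound

variable {E : Type*} [NormedAddCommGroup E] [NormedSpace ℝ E] [MeasurableSpace E] [BorelSpace E]
  [FiniteDimensional ℝ E] (μ : Measure E) [μ.IsAddHaarMeasure] {lam θ : ℝ}

theorem exists_integral_norm_sub_rpow_mul_japaneseBracket_rpow_le (hlam : 0 ≤ lam)
    (hlamd : lam < finrank ℝ E) (hθ : 0 ≤ θ) (hθd : θ < finrank ℝ E)
    (hsum : finrank ℝ E < lam + θ) :
    ∃ C : ℝ, ∀ x : E, Integrable (fun y ↦ ‖x - y‖ ^ (-lam) * japaneseBracket y ^ (-θ)) μ ∧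
      ∫ y, ‖x - y‖ ^ (-lam) * japaneseBracket y ^ (-θ) ∂μ ≤
        C * japaneseBracket x ^ ((finrank ℝ E : ℝ) - lam - θ) := by
  have : Nontrivial E :=
    Module.nontrivial_of_finrank_pos (R := ℝ) (by exact_mod_cast hlam.trans_lt hlamd)
  set d : ℝ := (finrank ℝ E : ℝ)
  set K₁ := ∫ y in ball (0 : E) 1, ‖y‖ ^ (-lam) ∂μ
  set K₂ := ∫ y in ball (0 : E) 1, ‖y‖ ^ (-θ) ∂μ
  set K₃ := ∫ y in (ball (0 : E) 1)ᶜ, ‖y‖ ^ (-(lam + θ)) ∂μ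
  refine ⟨2⁻¹ ^ (-θ) * 2⁻¹ ^ (d - lam) * K₁ + 2⁻¹ ^ (-lam) * 3 ^ (d - θ) * K₂ +
    2 ^ θ * 2 ^ (d - (lam + θ)) * K₃, fun x ↦ ?_⟩
  set M := japaneseBracket x
  have hM : 0 < M := japaneseBracket_pos x
  have h2M : 1 ≤ 2 * M := by linarith [one_le_japaneseBracket x]
  set g : E → ℝ := fun y ↦
    (2⁻¹ * M) ^ (-θ) * (ball 0 (2⁻¹ * M)).indicator (fun z ↦ ‖z‖ ^ (-lam)) (x - y) +
      (2⁻¹ * M) ^ (-lam) * (ball 0 (3 * M)).indicator (fun z ↦ ‖z‖ ^ (-θ)) y +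
      2 ^ θ * (ball 0 (2 * M))ᶜ.indicator (fun z ↦ ‖z‖ ^ (-(lam + θ))) (x - y) with hg
  have hg₁ := ((integrableOn_ball_norm_rpow_neg μ (2⁻¹ * M) hlamd).integrable_indicator
    measurableSet_ball).comp_sub_left x |>.const_mul ((2⁻¹ * M) ^ (-θ))
  have hg₂ := ((integrableOn_ball_norm_rpow_neg μ (3 * M) hθd).integrable_indicator
    measurableSet_ball).const_mul ((2⁻¹ * M) ^ (-lam))
  have hg₃ := ((integrableOn_compl_ball_norm_rpow_neg μ h2M hsum).integrable_indicator
    measurableSet_ball.compl).comp_sub_left x |>.const_mul (2 ^ θ)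
  have hg_int : Integrable g μ := (hg₁.add hg₂).add hg₃
  have hdom : ∀ᵐ y ∂μ, ‖x - y‖ ^ (-lam) * japaneseBracket y ^ (-θ) ≤ g y := by
    filter_upwards [Measure.ae_ne μ 0] with y hy
    exact norm_sub_rpow_mul_japaneseBracket_rpow_le hlam hθ x hy
  have hf_int : Integrable (fun y ↦ ‖x - y‖ ^ (-lam) * japaneseBracket y ^ (-θ)) μ := by
    refine hg_int.mono' (Measurable.aestronglyMeasurable (by fun_prop)) ?_
    filter_upwards [hdom] with y hy
    rwa [Real.norm_of_nonneg (by positivity [japaneseBracket_pos y])]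
  refine ⟨hf_int, (integral_mono_ae hf_int hg_int hdom).trans (le_of_eq ?_)⟩
  simp only [hg]
  rw [integral_add _ hg₃, integral_add hg₁ hg₂, integral_const_mul, integral_const_mul,
    integral_const_mul, integral_sub_left_eq_self _ μ x, integral_sub_left_eq_self _ μ x,
    integral_indicator measurableSet_ball, integral_indicator measurableSet_ball,
    integral_indicator measurableSet_ball.compl,
    setIntegral_ball_norm_rpow_neg μ (by positivity) lam,
    setIntegral_ball_norm_rpow_neg μ (by positivity) θ,
    setIntegral_compl_ball_norm_rpow_neg μ (by positivity) (lam + θ)]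
  · have h₁ := mul_rpow_mul_mul_rpow (M := M) (a := 2⁻¹) (b := 2⁻¹) (by norm_num) (by norm_num) hM
      (show -θ + (d - lam) = d - lam - θ by ring)
    have h₂ := mul_rpow_mul_mul_rpow (M := M) (a := 2⁻¹) (b := 3) (by norm_num) (by norm_num) hM
      (show -lam + (d - θ) = d - lam - θ by ring)
    have h₃ : (2 * M) ^ (d - (lam + θ)) = 2 ^ (d - (lam + θ)) * M ^ (d - lam - θ) := by
      rw [Real.mul_rpow zero_le_two hM.le, sub_add_eq_sub_sub]
    rw [← mul_assoc, h₁, ← mul_assoc, h₂, h₃]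
    ring
  · exact hg₁.add hg₂

end UpperBound

section LowerBound

variable {E : Type*} [NormedAddCommGroup E] [NormedSpace ℝ E] [MeasurableSpace E] [BorelSpace E]
  [FiniteDimensional ℝ E] [Nontrivial E] (μ : Measure E) [μ.IsAddHaarMeasure] {lam θ : ℝ}

theorem le_integral_norm_sub_rpow_mul_japaneseBracket_rpow (hlam : 0 ≤ lam) (hθ : 0 ≤ θ) (x : E)
    (hf : Integrable (fun y ↦ ‖x - y‖ ^ (-lam) * japaneseBracket y ^ (-θ)) μ) :
    2 ^ (-θ) * μ.real (ball 0 1) * japaneseBracket x ^ ((finrank ℝ E : ℝ) - lam - θ) ≤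
      ∫ y, ‖x - y‖ ^ (-lam) * japaneseBracket y ^ (-θ) ∂μ := by
  set M := japaneseBracket x
  have hM : 0 < M := japaneseBracket_pos x
  set s := closedBall x M \ {x}
  have hs : MeasurableSet s := measurableSet_closedBall.diff (measurableSet_singleton x)
  have hμs : μ.real s = M ^ finrank ℝ E * μ.real (ball 0 1) := by
    rw [measureReal_def, measure_sdiff_null (measure_singleton x), ← measureReal_def,
      Measure.addHaar_real_closedBall μ x hM.le]
  have hbound : ∀ y ∈ s, M ^ (-lam) * (2 * M) ^ (-θ) ≤
      ‖x - y‖ ^ (-lam) * japaneseBracket y ^ (-θ) := by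
    rintro y ⟨hyM, hyx⟩
    have hxy : ‖x - y‖ ≤ M := by rwa [norm_sub_rev, ← dist_eq_norm]
    have hxy_pos : 0 < ‖x - y‖ := norm_pos_iff.mpr (sub_ne_zero.mpr (Ne.symm hyx))
    have hyM' : japaneseBracket y ≤ 2 * M := by
      linarith [japaneseBracket_le_add_norm_sub y x, norm_sub_rev x y]
    exact mul_le_mul (Real.rpow_le_rpow_of_nonpos hxy_pos hxy (by linarith))
      (Real.rpow_le_rpow_of_nonpos (japaneseBracket_pos y) hyM' (by linarith))
      (by positivity) (by positivity)
  clear_value M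
  calc 2 ^ (-θ) * μ.real (ball 0 1) * M ^ ((finrank ℝ E : ℝ) - lam - θ)
      = M ^ (-lam) * (2 * M) ^ (-θ) * μ.real s := by
        rw [hμs, Real.mul_rpow zero_le_two hM.le, ← Real.rpow_natCast,
          show M ^ ((finrank ℝ E : ℝ) - lam - θ) = M ^ (-lam) * M ^ (-θ) * M ^ (finrank ℝ E : ℝ) by
            rw [← Real.rpow_add hM, ← Real.rpow_add hM]; ring_nf]
        ring
    _ ≤ ∫ y in s, ‖x - y‖ ^ (-lam) * japaneseBracket y ^ (-θ) ∂μ :=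
        setIntegral_ge_of_const_le_real hs
          ((measure_mono sdiff_subset).trans_lt measure_closedBall_lt_top).ne hbound hf.integrableOn
    _ ≤ ∫ y, ‖x - y‖ ^ (-lam) * japaneseBracket y ^ (-θ) ∂μ :=
        setIntegral_le_integral hf (ae_of_all _ fun y ↦ by positivity [japaneseBracket_pos y])

end LowerBound

theorem stmt0_general (N : ℕ) (lam θ : ℝ)
    (hlam0 : 0 < lam) (hlamN : lam < N) (hθ0 : 0 < θ)
    (hsum : (N : ℝ) < θ + lam) (hθN : θ < N) :
    ∃ c C : ℝ, 0 < c ∧ 0 < C ∧ ∀ x : EuclideanSpace ℝ (Fin N),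
      c * (1 + ‖x‖ ^ 2) ^ (((N : ℝ) - lam - θ) / 2) ≤
          (∫ y : EuclideanSpace ℝ (Fin N),
            ‖x - y‖ ^ (-lam) * (1 + ‖y‖ ^ 2) ^ (-θ / 2)) ∧
      (∫ y : EuclideanSpace ℝ (Fin N),
            ‖x - y‖ ^ (-lam) * (1 + ‖y‖ ^ 2) ^ (-θ / 2)) ≤
          C * (1 + ‖x‖ ^ 2) ^ (((N : ℝ) - lam - θ) / 2) := by
  have hfinrank : (finrank ℝ (EuclideanSpace ℝ (Fin N)) : ℝ) = N := by simp
  have : Nontrivial (EuclideanSpace ℝ (Fin N)) :=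
    Module.nontrivial_of_finrank_pos (R := ℝ) (by exact_mod_cast hfinrank ▸ hlam0.trans hlamN)
  obtain ⟨C, hC⟩ := exists_integral_norm_sub_rpow_mul_japaneseBracket_rpow_le volume hlam0.le
    (hfinrank ▸ hlamN) hθ0.le (hfinrank ▸ hθN) (by rw [hfinrank]; linarith)
  refine ⟨2 ^ (-θ) * volume.real (ball (0 : EuclideanSpace ℝ (Fin N)) 1), max C 1,
    mul_pos (by positivity) (ENNReal.toReal_pos (Metric.measure_ball_pos _ _ one_pos).ne'
      measure_ball_lt_top.ne), by positivity, fun x ↦ ?_⟩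
  obtain ⟨hint, hle⟩ := hC x
  simp_rw [one_add_norm_sq_rpow_div_two, ← hfinrank]
  exact ⟨le_integral_norm_sub_rpow_mul_japaneseBracket_rpow volume hlam0.le hθ0.le x hint,
    hle.trans (mul_le_mul_of_nonneg_right (le_max_left C 1)
      (by positivity [japaneseBracket_pos x]))⟩

/-- For `1 ≤ N`, `0 < λ < N`, `θ > 0`, `θ + λ > N` and `θ < N`, the integral
`∫ |x-y|^{-λ} ⟨y⟩^{-θ} dy` is comparable to `⟨x⟩^{N-λ-θ}`, where `⟨y⟩ = (1+|y|²)^{1/2}`. -/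
theorem stmt0 (N : ℕ) (hN : 1 ≤ N) (lam θ : ℝ)
    (hlam0 : 0 < lam) (hlamN : lam < N) (hθ0 : 0 < θ)
    (hsum : (N : ℝ) < θ + lam) (hθN : θ < N) :
    ∃ c C : ℝ, 0 < c ∧ 0 < C ∧ ∀ x : EuclideanSpace ℝ (Fin N),
      c * (1 + ‖x‖ ^ 2) ^ (((N : ℝ) - lam - θ) / 2) ≤
          (∫ y : EuclideanSpace ℝ (Fin N),
            ‖x - y‖ ^ (-lam) * (1 + ‖y‖ ^ 2) ^ (-θ / 2)) ∧
      (∫ y : EuclideanSpace ℝ (Fin N),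
            ‖x - y‖ ^ (-lam) * (1 + ‖y‖ ^ 2) ^ (-θ / 2)) ≤
          C * (1 + ‖x‖ ^ 2) ^ (((N : ℝ) - lam - θ) / 2) :=
  stmt0_general N lam θ hlam0 hlamN hθ0 hsum hθN
end

section
/- Let N ≥ 1, λ ∈ (0, N) and θ > N. Then ∫_{ℝ^N} |x−y|^{−λ} ⟨y⟩^{−θ} dy is comparable (up to constants depending on N, λ, θ) to ⟨x⟩^{−λ}. -/
open MeasureTheory Metric Set Real
open scoped ENNReal NNReal

lemma dyadic_key (m : ℕ) : (2:ℝ) ^ (-(m:ℝ)) = ((1:ℝ)/2) ^ m := by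
  rw [rpow_neg (by norm_num), rpow_natCast, one_div, inv_pow]

lemma dyadic_exists {t : ℝ} (h0 : 0 < t) (h1 : t < 1) :
    ∃ k : ℕ, (2:ℝ) ^ (-(k:ℝ) - 1) ≤ t ∧ t < 2 ^ (-(k:ℝ)) := by
  have hP : ∃ n : ℕ, ((1:ℝ)/2) ^ n ≤ t := by
    obtain ⟨n, hn⟩ := exists_pow_lt_of_lt_one h0 (by norm_num : (1:ℝ)/2 < 1)
    exact ⟨n, hn.le⟩
  classical
  set n := Nat.find hP with hn
  have hspec : ((1:ℝ)/2) ^ n ≤ t := Nat.find_spec hP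
  have hn0 : n ≠ 0 := by
    intro h
    rw [h] at hspec; simp at hspec; linarith
  refine ⟨n - 1, ?_, ?_⟩
  · have h3 : n - 1 + 1 = n := Nat.succ_pred_eq_of_pos (Nat.pos_of_ne_zero hn0)
    have h2 : (2:ℝ) ^ (-((n-1:ℕ):ℝ) - 1) = ((1:ℝ)/2) ^ n := by
      rw [show (-((n-1:ℕ):ℝ) - 1) = -(((n-1)+1:ℕ):ℝ) by push_cast; ring, dyadic_key, h3]
    rw [h2]; exact hspec
  · have hmin : ¬ ((1:ℝ)/2) ^ (n-1) ≤ t := Nat.find_min hP (Nat.pred_lt hn0)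
    rw [dyadic_key]; linarith [not_le.mp hmin]

lemma ball_kernel_lintegral (N : ℕ) (hN : 1 ≤ N) (lam : ℝ) (hlam0 : 0 < lam) (hlamN : lam < N) :
    ∃ κ : ℝ≥0∞, κ ≠ ⊤ ∧ ∀ R : ℝ, 0 < R →
      ∫⁻ z in ball (0 : EuclideanSpace ℝ (Fin N)) R, ENNReal.ofReal (‖z‖ ^ (-lam)) ≤
        κ * ENNReal.ofReal (R ^ ((N:ℝ) - lam)) := by
  haveI : Nontrivial (EuclideanSpace ℝ (Fin N)) := by
    have h : ‖EuclideanSpace.single (⟨0, hN⟩ : Fin N) (1:ℝ)‖ = 1 := by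
      simp [EuclideanSpace.norm_single]
    refine nontrivial_of_ne (EuclideanSpace.single (⟨0, hN⟩ : Fin N) (1:ℝ)) 0 fun hc => ?_
    rw [hc] at h; simp at h
  set E := EuclideanSpace ℝ (Fin N)
  set vB := volume (ball (0:E) 1) with hvB
  have hvBtop : vB ≠ ⊤ := measure_ball_lt_top.ne
  set q : ℝ≥0∞ := ENNReal.ofReal ((2:ℝ) ^ (lam - (N:ℝ))) with hq
  have hq1 : q < 1 := by
    rw [hq, ← ENNReal.ofReal_one]
    apply ENNReal.ofReal_lt_ofReal_iff_of_nonneg (by positivity) |>.mpr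
    exact rpow_lt_one_of_one_lt_of_neg one_lt_two (by linarith)
  have hsum : (∑' k : ℕ, q ^ k) ≠ ⊤ := by
    rw [ENNReal.tsum_geometric]
    exact ENNReal.inv_ne_top.mpr (by simp [tsub_eq_zero_iff_le, not_le, hq1])
  refine ⟨vB * ENNReal.ofReal ((2:ℝ) ^ lam) * ∑' k : ℕ, q ^ k, ?_, ?_⟩
  · exact ENNReal.mul_ne_top (ENNReal.mul_ne_top hvBtop ENNReal.ofReal_ne_top) hsum
  intro R hR
  -- the annuli
  set A : ℕ → Set E := fun k => ball (0:E) (R * 2 ^ (-(k:ℝ))) \ ball (0:E) (R * 2 ^ (-(k:ℝ) - 1))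
    with hA
  have cover : ball (0:E) R ⊆ {0} ∪ ⋃ k : ℕ, A k := by
    intro z hz
    rcases eq_or_ne z 0 with rfl | hz0
    · exact Or.inl rfl
    refine Or.inr ?_
    have hznorm : 0 < ‖z‖ := norm_pos_iff.mpr hz0
    have hzR : ‖z‖ < R := by simpa [mem_ball, dist_eq_norm] using hz
    obtain ⟨k, hk1, hk2⟩ := dyadic_exists (t := ‖z‖ / R) (by positivity) ((div_lt_one hR).mpr hzR)
    refine mem_iUnion.mpr ⟨k, ?_, ?_⟩
    · rw [mem_ball, dist_eq_norm, sub_zero]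
      calc ‖z‖ = (‖z‖ / R) * R := by field_simp
        _ < 2 ^ (-(k:ℝ)) * R := by exact mul_lt_mul_of_pos_right hk2 hR
        _ = R * 2 ^ (-(k:ℝ)) := mul_comm _ _
    · rw [mem_ball, dist_eq_norm, sub_zero, not_lt]
      calc R * 2 ^ (-(k:ℝ) - 1) = 2 ^ (-(k:ℝ) - 1) * R := mul_comm _ _
        _ ≤ (‖z‖ / R) * R := mul_le_mul_of_nonneg_right hk1 hR.le
        _ = ‖z‖ := by field_simp

  have hid : ∀ k : ℕ, (R * 2 ^ (-(k:ℝ)-1)) ^ (-lam) * (R * 2 ^ (-(k:ℝ))) ^ (N:ℕ)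
      = 2 ^ lam * R ^ ((N:ℝ)-lam) * ((2:ℝ) ^ (lam - (N:ℝ))) ^ (k:ℕ) := by
    intro k
    have h2 : (0:ℝ) ≤ 2 := by norm_num
    have e1 : (R * 2 ^ (-(k:ℝ)-1)) ^ (-lam) = R ^ (-lam) * 2 ^ ((-(k:ℝ)-1)*(-lam)) := by
      rw [mul_rpow hR.le (by positivity), ← rpow_mul h2]
    have e2 : (R * 2 ^ (-(k:ℝ))) ^ (N:ℕ) = R ^ ((N:ℕ):ℝ) * 2 ^ (-(k:ℝ)*((N:ℕ):ℝ)) := by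
      rw [mul_pow, ← rpow_natCast R N, ← rpow_natCast ((2:ℝ) ^ (-(k:ℝ))) N, ← rpow_mul h2]
    have e3 : ((2:ℝ) ^ (lam - (N:ℝ))) ^ (k:ℕ) = (2:ℝ) ^ ((lam - (N:ℝ))*(k:ℝ)) := by
      rw [← rpow_natCast ((2:ℝ) ^ (lam - (N:ℝ))) k, ← rpow_mul h2]
    rw [e1, e2, e3]
    calc R ^ (-lam) * 2 ^ ((-(k:ℝ)-1)*(-lam)) * (R ^ ((N:ℕ):ℝ) * 2 ^ (-(k:ℝ)*((N:ℕ):ℝ)))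
        = (R ^ (-lam) * R ^ ((N:ℕ):ℝ)) * (2 ^ ((-(k:ℝ)-1)*(-lam)) * 2 ^ (-(k:ℝ)*((N:ℕ):ℝ))) := by
          ring
      _ = R ^ (-lam + (N:ℝ)) * 2 ^ ((-(k:ℝ)-1)*(-lam) + -(k:ℝ)*((N:ℕ):ℝ)) := by
          rw [← rpow_add hR, ← rpow_add (by norm_num : (0:ℝ) < 2)]
      _ = R ^ ((N:ℝ) - lam) * 2 ^ (lam + (lam - (N:ℝ))*(k:ℝ)) := by
          rw [show -lam + (N:ℝ) = (N:ℝ) - lam by ring,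
            show (-(k:ℝ)-1)*(-lam) + -(k:ℝ)*((N:ℕ):ℝ) = lam + (lam - (N:ℝ))*(k:ℝ) by ring]
      _ = 2 ^ lam * R ^ ((N:ℝ)-lam) * 2 ^ ((lam - (N:ℝ))*(k:ℝ)) := by
          rw [rpow_add (by norm_num : (0:ℝ) < 2)]; ring
  have hAk : ∀ k : ℕ, ∫⁻ z in A k, ENNReal.ofReal (‖z‖ ^ (-lam)) ≤
      (ENNReal.ofReal ((2:ℝ) ^ lam) * ENNReal.ofReal (R ^ ((N:ℝ)-lam)) * q ^ k) * vB := by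
    intro k
    have hr1 : (0:ℝ) < R * 2 ^ (-(k:ℝ)-1) := by positivity
    have hr2 : (0:ℝ) ≤ R * 2 ^ (-(k:ℝ)) := by positivity
    have hb : ∀ z ∈ A k, ENNReal.ofReal (‖z‖ ^ (-lam)) ≤
        ENNReal.ofReal ((R * 2 ^ (-(k:ℝ)-1)) ^ (-lam)) := by
      intro z hz
      apply ENNReal.ofReal_le_ofReal
      apply rpow_le_rpow_of_nonpos hr1 _ (by linarith)
      have := hz.2
      rw [mem_ball, dist_eq_norm, sub_zero, not_lt] at this
      exact this
    calc ∫⁻ z in A k, ENNReal.ofReal (‖z‖ ^ (-lam))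
        ≤ ∫⁻ _ in A k, ENNReal.ofReal ((R * 2 ^ (-(k:ℝ)-1)) ^ (-lam)) :=
          setLIntegral_mono measurable_const hb
      _ = ENNReal.ofReal ((R * 2 ^ (-(k:ℝ)-1)) ^ (-lam)) * volume (A k) := setLIntegral_const _ _
      _ ≤ ENNReal.ofReal ((R * 2 ^ (-(k:ℝ)-1)) ^ (-lam)) * volume (ball (0:E) (R * 2 ^ (-(k:ℝ)))) :=
          mul_le_mul_right (measure_mono diff_subset) _
      _ = ENNReal.ofReal ((R * 2 ^ (-(k:ℝ)-1)) ^ (-lam)) *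
            (ENNReal.ofReal ((R * 2 ^ (-(k:ℝ))) ^ (N:ℕ)) * vB) := by
          rw [Measure.addHaar_ball volume _ hr2, finrank_euclideanSpace_fin]
      _ = ENNReal.ofReal ((R * 2 ^ (-(k:ℝ)-1)) ^ (-lam) * (R * 2 ^ (-(k:ℝ))) ^ (N:ℕ)) * vB := by
          rw [← mul_assoc, ← ENNReal.ofReal_mul (by positivity)]
      _ = (ENNReal.ofReal ((2:ℝ) ^ lam) * ENNReal.ofReal (R ^ ((N:ℝ)-lam)) * q ^ k) * vB := by
          rw [hid k, ENNReal.ofReal_mul (by positivity), ENNReal.ofReal_mul (by positivity),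
            ENNReal.ofReal_pow (by positivity)]
  calc ∫⁻ z in ball (0:E) R, ENNReal.ofReal (‖z‖ ^ (-lam))
      ≤ ∫⁻ z in ({0} ∪ ⋃ k : ℕ, A k : Set E), ENNReal.ofReal (‖z‖ ^ (-lam)) :=
        lintegral_mono_set cover
    _ ≤ (∫⁻ z in ({0} : Set E), ENNReal.ofReal (‖z‖ ^ (-lam)))
          + ∫⁻ z in (⋃ k : ℕ, A k), ENNReal.ofReal (‖z‖ ^ (-lam)) := lintegral_union_le _ _ _
    _ = ∫⁻ z in (⋃ k : ℕ, A k), ENNReal.ofReal (‖z‖ ^ (-lam)) := by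
        rw [setLIntegral_measure_zero _ _ (measure_singleton (0:E)), zero_add]
    _ ≤ ∑' k : ℕ, ∫⁻ z in A k, ENNReal.ofReal (‖z‖ ^ (-lam)) := lintegral_iUnion_le _ _
    _ ≤ ∑' k : ℕ, (ENNReal.ofReal ((2:ℝ) ^ lam) * ENNReal.ofReal (R ^ ((N:ℝ)-lam)) * q ^ k) * vB :=
        ENNReal.tsum_le_tsum hAk
    _ = vB * ENNReal.ofReal ((2:ℝ) ^ lam) * (∑' k : ℕ, q ^ k) * ENNReal.ofReal (R ^ ((N:ℝ)-lam)) := by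
        simp_rw [show ∀ k : ℕ, (ENNReal.ofReal ((2:ℝ) ^ lam) * ENNReal.ofReal (R ^ ((N:ℝ)-lam)) * q ^ k) * vB
          = (ENNReal.ofReal ((2:ℝ) ^ lam) * ENNReal.ofReal (R ^ ((N:ℝ)-lam)) * vB) * q ^ k from
          fun k => by ring, ENNReal.tsum_mul_left]
        ring

example (N : ℕ) (lam R : ℝ) (hR : 0 < R) (k : ℕ) :
    (R * 2 ^ (-(k:ℝ)-1)) ^ (-lam) * (R * 2 ^ (-(k:ℝ))) ^ (N:ℕ)
      = 2 ^ lam * R ^ ((N:ℝ)-lam) * ((2:ℝ) ^ (lam - (N:ℝ))) ^ (k:ℕ) := by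
  have h2 : (0:ℝ) ≤ 2 := by norm_num
  have e1 : (R * 2 ^ (-(k:ℝ)-1)) ^ (-lam) = R ^ (-lam) * 2 ^ ((-(k:ℝ)-1)*(-lam)) := by
    rw [mul_rpow hR.le (by positivity), ← rpow_mul h2]
  have e2 : (R * 2 ^ (-(k:ℝ))) ^ (N:ℕ) = R ^ ((N:ℕ):ℝ) * 2 ^ (-(k:ℝ)*((N:ℕ):ℝ)) := by
    rw [mul_pow, ← rpow_natCast R N, ← rpow_natCast ((2:ℝ) ^ (-(k:ℝ))) N, ← rpow_mul h2]
  have e3 : ((2:ℝ) ^ (lam - (N:ℝ))) ^ (k:ℕ) = (2:ℝ) ^ ((lam - (N:ℝ))*(k:ℝ)) := by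
    rw [← rpow_natCast ((2:ℝ) ^ (lam - (N:ℝ))) k, ← rpow_mul h2]
  rw [e1, e2, e3]
  calc R ^ (-lam) * 2 ^ ((-(k:ℝ)-1)*(-lam)) * (R ^ ((N:ℕ):ℝ) * 2 ^ (-(k:ℝ)*((N:ℕ):ℝ)))
      = (R ^ (-lam) * R ^ ((N:ℕ):ℝ)) * (2 ^ ((-(k:ℝ)-1)*(-lam)) * 2 ^ (-(k:ℝ)*((N:ℕ):ℝ))) := by
        ring
    _ = R ^ (-lam + (N:ℝ)) * 2 ^ ((-(k:ℝ)-1)*(-lam) + -(k:ℝ)*((N:ℕ):ℝ)) := by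
        rw [← rpow_add hR, ← rpow_add (by norm_num : (0:ℝ) < 2)]
    _ = R ^ ((N:ℝ) - lam) * 2 ^ (lam + (lam - (N:ℝ))*(k:ℝ)) := by
        rw [show -lam + (N:ℝ) = (N:ℝ) - lam by ring,
          show (-(k:ℝ)-1)*(-lam) + -(k:ℝ)*((N:ℕ):ℝ) = lam + (lam - (N:ℝ))*(k:ℝ) by push_cast; ring]
    _ = 2 ^ lam * R ^ ((N:ℝ)-lam) * 2 ^ ((lam - (N:ℝ))*(k:ℝ)) := by
        rw [rpow_add (by norm_num : (0:ℝ) < 2)]; ring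


/-- For `1 ≤ N`, `0 < λ < N` and `θ > N`, the integral
`∫ |x-y|^{-λ} ⟨y⟩^{-θ} dy` is comparable to `⟨x⟩^{-λ}`. -/
theorem stmt1 (N : ℕ) (hN : 1 ≤ N) (lam θ : ℝ)
    (hlam0 : 0 < lam) (hlamN : lam < N) (hθN : (N : ℝ) < θ) :
    ∃ c C : ℝ, 0 < c ∧ 0 < C ∧ ∀ x : EuclideanSpace ℝ (Fin N),
      c * (1 + ‖x‖ ^ 2) ^ (-lam / 2) ≤
          (∫ y : EuclideanSpace ℝ (Fin N),
            ‖x - y‖ ^ (-lam) * (1 + ‖y‖ ^ 2) ^ (-θ / 2)) ∧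
      (∫ y : EuclideanSpace ℝ (Fin N),
            ‖x - y‖ ^ (-lam) * (1 + ‖y‖ ^ 2) ^ (-θ / 2)) ≤
          C * (1 + ‖x‖ ^ 2) ^ (-lam / 2) := by
  classical
  haveI hNT : Nontrivial (EuclideanSpace ℝ (Fin N)) := by
    have h : ‖EuclideanSpace.single (⟨0, hN⟩ : Fin N) (1:ℝ)‖ = 1 := by
      simp [EuclideanSpace.norm_single]
    refine nontrivial_of_ne (EuclideanSpace.single (⟨0, hN⟩ : Fin N) (1:ℝ)) 0 fun hc => ?_
    rw [hc] at h; simp at h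
  set E := EuclideanSpace ℝ (Fin N) with hE
  have hθ0 : (0:ℝ) < θ := lt_of_le_of_lt (Nat.cast_nonneg N) hθN
  obtain ⟨κ, hκtop, hκ⟩ := ball_kernel_lintegral N hN lam hlam0 hlamN
  have hgint : Integrable (fun y : E => ((1:ℝ) + ‖y‖ ^ 2) ^ (-θ / 2)) := by
    apply integrable_rpow_neg_one_add_norm_sq
    rwa [finrank_euclideanSpace_fin]
  set I : ℝ≥0∞ := ∫⁻ y : E, ENNReal.ofReal (((1:ℝ) + ‖y‖ ^ 2) ^ (-θ / 2)) with hI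
  have hItop : I ≠ ⊤ := hgint.lintegral_lt_top.ne
  set vB := volume (ball (0:E) 1) with hvB
  have hvBtop : vB ≠ ⊤ := measure_ball_lt_top.ne
  have hvBpos : 0 < vB := measure_ball_pos _ _ one_pos
  set F : E → E → ℝ≥0∞ :=
    fun x y => ENNReal.ofReal (‖x - y‖ ^ (-lam) * (1 + ‖y‖ ^ 2) ^ (-θ / 2)) with hF
  have hFmeas : ∀ x, Measurable (F x) := fun x => by
    rw [hF]; fun_prop
  have hnonneg : ∀ x y : E, 0 ≤ ‖x - y‖ ^ (-lam) * (1 + ‖y‖ ^ 2) ^ (-θ / 2) := fun x y => by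
    positivity
  -- comparison of 1 + ‖x‖ with the Japanese bracket
  have hbr1 : ∀ x : E, (1 + ‖x‖) ^ (-lam) ≤ (1 + ‖x‖ ^ 2) ^ (-lam / 2) := by
    intro x
    have h1 : (1 + ‖x‖) ^ (-lam) = ((1 + ‖x‖) ^ (2:ℕ)) ^ (-lam / 2) := by
      rw [← rpow_natCast (1 + ‖x‖) 2, ← rpow_mul (by positivity)]
      congr 1; push_cast; ring
    rw [h1]
    apply rpow_le_rpow_of_nonpos (by positivity) (by nlinarith [norm_nonneg x]) (by linarith)
  have hbr2 : ∀ x : E, (2:ℝ) ^ (-lam/2) * (1 + ‖x‖ ^ 2) ^ (-lam / 2) ≤ (1 + ‖x‖) ^ (-lam) := by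
    intro x
    have h1 : (1 + ‖x‖) ^ (-lam) = ((1 + ‖x‖) ^ (2:ℕ)) ^ (-lam / 2) := by
      rw [← rpow_natCast (1 + ‖x‖) 2, ← rpow_mul (by positivity)]
      congr 1; push_cast; ring
    have h2 : (2:ℝ) ^ (-lam/2) * (1 + ‖x‖ ^ 2) ^ (-lam / 2) = (2 * (1 + ‖x‖ ^ 2)) ^ (-lam/2) := by
      rw [mul_rpow (by norm_num) (by positivity)]
    rw [h1, h2]
    apply rpow_le_rpow_of_nonpos (by positivity)
      (by nlinarith [norm_nonneg x, sq_nonneg (1 - ‖x‖)]) (by linarith)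
  -- upper bound for the lintegral
  set A' : ℝ := (2:ℝ) ^ (θ/2) * 2 ^ θ * 2 ^ (lam - (N:ℝ)) with hA'
  have hA'pos : 0 < A' := by positivity
  have upper : ∀ x : E, ∫⁻ y, F x y ≤
      (ENNReal.ofReal A' * κ + ENNReal.ofReal ((2:ℝ) ^ lam) * I)
        * ENNReal.ofReal ((1 + ‖x‖ ^ 2) ^ (-lam / 2)) := by
    intro x
    set R : ℝ := (1 + ‖x‖) / 2 with hR
    have hRpos : 0 < R := by positivity
    have hx1 : (0:ℝ) < 1 + ‖x‖ := by positivity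
    have hball : ∫⁻ y in ball x R, F x y ≤ κ * ENNReal.ofReal (A' * (1 + ‖x‖) ^ (-lam)) := by
      set C3 : ℝ := (2:ℝ)^(θ/2) * 2^θ * (1+‖x‖) ^ (-θ) with hC3
      have hC3nn : 0 ≤ C3 := by positivity
      have hpoint : ∀ y ∈ ball x R, F x y ≤
          ENNReal.ofReal C3 * ENNReal.ofReal (‖x - y‖ ^ (-lam)) := by
        intro y hy
        rw [← ENNReal.ofReal_mul hC3nn]
        apply ENNReal.ofReal_le_ofReal
        rw [show C3 * ‖x - y‖ ^ (-lam) = ‖x - y‖ ^ (-lam) * C3 from mul_comm _ _]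
        apply mul_le_mul_of_nonneg_left _ (by positivity)
        have h2 : (1 + ‖x‖)/2 ≤ 1 + ‖y‖ := by
          have hd := mem_ball.mp hy
          rw [dist_eq_norm] at hd
          have h6 := norm_sub_norm_le x y
          have h7 : ‖x - y‖ = ‖y - x‖ := norm_sub_rev _ _
          linarith
        calc (1 + ‖y‖ ^ 2) ^ (-θ/2) ≤ (2:ℝ)^(θ/2) * (1 + ‖y‖) ^ (-θ) :=
              rpow_neg_one_add_norm_sq_le y hθ0
          _ ≤ (2:ℝ)^(θ/2) * ((1+‖x‖)/2) ^ (-θ) :=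
              mul_le_mul_of_nonneg_left
                (rpow_le_rpow_of_nonpos (by positivity) h2 (by linarith)) (by positivity)
          _ = C3 := by
              rw [hC3, div_rpow hx1.le (by norm_num : (0:ℝ) ≤ 2),
                rpow_neg (by norm_num : (0:ℝ) ≤ 2) θ, div_inv_eq_mul]
              ring
      calc ∫⁻ y in ball x R, F x y
          ≤ ∫⁻ y in ball x R, ENNReal.ofReal C3 * ENNReal.ofReal (‖x - y‖ ^ (-lam)) :=
            setLIntegral_mono (by fun_prop) hpoint
        _ = ENNReal.ofReal C3 * ∫⁻ y in ball x R, ENNReal.ofReal (‖x - y‖ ^ (-lam)) :=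
            lintegral_const_mul' _ _ ENNReal.ofReal_ne_top
        _ = ENNReal.ofReal C3 * ∫⁻ z in ball (0:E) R, ENNReal.ofReal (‖z‖ ^ (-lam)) := by
            congr 1
            have hpre : (fun y : E => x - y) ⁻¹' (ball (0:E) R) = ball x R := by
              ext y
              simp [mem_ball, dist_eq_norm, norm_sub_rev]
            rw [← hpre]
            exact (Measure.measurePreserving_sub_left volume x).setLIntegral_comp_preimage_emb
              (MeasurableEquiv.subLeft x).measurableEmbedding
              (fun z => ENNReal.ofReal (‖z‖ ^ (-lam))) (ball 0 R)
        _ ≤ ENNReal.ofReal C3 * (κ * ENNReal.ofReal (R ^ ((N:ℝ) - lam))) :=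
            mul_le_mul_right (hκ R hRpos) _
        _ = κ * ENNReal.ofReal (C3 * R ^ ((N:ℝ) - lam)) := by
            rw [ENNReal.ofReal_mul hC3nn]; ring
        _ ≤ κ * ENNReal.ofReal (A' * (1 + ‖x‖) ^ (-lam)) := by
            apply mul_le_mul_right
            apply ENNReal.ofReal_le_ofReal
            have e5 : R ^ ((N:ℝ) - lam) = 2 ^ (lam - (N:ℝ)) * (1+‖x‖) ^ ((N:ℝ) - lam) := by
              rw [hR, div_rpow hx1.le (by norm_num : (0:ℝ) ≤ 2),
                show lam - (N:ℝ) = -((N:ℝ) - lam) by ring,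
                rpow_neg (by norm_num : (0:ℝ) ≤ 2)]
              ring
            calc C3 * R ^ ((N:ℝ) - lam)
                = A' * ((1+‖x‖) ^ (-θ) * (1+‖x‖) ^ ((N:ℝ) - lam)) := by
                  rw [e5, hC3, hA']; ring
              _ = A' * (1+‖x‖) ^ (-θ + ((N:ℝ) - lam)) := by rw [← rpow_add hx1]
              _ ≤ A' * (1+‖x‖) ^ (-lam) := by
                  apply mul_le_mul_of_nonneg_left _ hA'pos.le
                  apply rpow_le_rpow_of_exponent_le (by linarith [norm_nonneg x]) (by linarith)
    have hcompl : ∫⁻ y in (ball x R)ᶜ, F x y ≤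
        I * ENNReal.ofReal ((2:ℝ)^lam * (1+‖x‖) ^ (-lam)) := by
      have hRlam : R ^ (-lam) = (2:ℝ)^lam * (1+‖x‖) ^ (-lam) := by
        rw [hR, div_rpow hx1.le (by norm_num : (0:ℝ) ≤ 2),
          rpow_neg (by norm_num : (0:ℝ) ≤ 2) lam, div_inv_eq_mul]
        ring
      have hpoint2 : ∀ y ∈ (ball x R)ᶜ, F x y ≤
          ENNReal.ofReal (R ^ (-lam)) * ENNReal.ofReal ((1 + ‖y‖ ^ 2) ^ (-θ / 2)) := by
        intro y hy
        rw [← ENNReal.ofReal_mul (by positivity)]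
        apply ENNReal.ofReal_le_ofReal
        apply mul_le_mul_of_nonneg_right _ (by positivity)
        have hd : R ≤ ‖x - y‖ := by
          rw [mem_compl_iff, mem_ball, dist_eq_norm, not_lt] at hy
          calc R ≤ ‖y - x‖ := hy
            _ = ‖x - y‖ := (norm_sub_rev _ _).symm
        exact rpow_le_rpow_of_nonpos hRpos hd (by linarith)
      calc ∫⁻ y in (ball x R)ᶜ, F x y
          ≤ ∫⁻ y in (ball x R)ᶜ,
              ENNReal.ofReal (R ^ (-lam)) * ENNReal.ofReal ((1 + ‖y‖ ^ 2) ^ (-θ / 2)) :=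
            setLIntegral_mono (by fun_prop) hpoint2
        _ = ENNReal.ofReal (R ^ (-lam)) *
              ∫⁻ y in (ball x R)ᶜ, ENNReal.ofReal ((1 + ‖y‖ ^ 2) ^ (-θ / 2)) :=
            lintegral_const_mul' _ _ ENNReal.ofReal_ne_top
        _ ≤ ENNReal.ofReal (R ^ (-lam)) * I := by
            apply mul_le_mul_right
            rw [hI]
            exact setLIntegral_le_lintegral _ _
        _ = I * ENNReal.ofReal ((2:ℝ)^lam * (1+‖x‖) ^ (-lam)) := by rw [hRlam]; ring
    calc ∫⁻ y, F x y = (∫⁻ y in ball x R, F x y) + ∫⁻ y in (ball x R)ᶜ, F x y :=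
          (lintegral_add_compl (F x) measurableSet_ball).symm
      _ ≤ κ * ENNReal.ofReal (A' * (1+‖x‖) ^ (-lam))
            + I * ENNReal.ofReal ((2:ℝ)^lam * (1+‖x‖) ^ (-lam)) := add_le_add hball hcompl
      _ = (ENNReal.ofReal A' * κ + ENNReal.ofReal ((2:ℝ)^lam) * I)
            * ENNReal.ofReal ((1+‖x‖) ^ (-lam)) := by
          rw [ENNReal.ofReal_mul hA'pos.le,
            ENNReal.ofReal_mul (by positivity : (0:ℝ) ≤ (2:ℝ)^lam)]
          ring
      _ ≤ _ := mul_le_mul_right (ENNReal.ofReal_le_ofReal (hbr1 x)) _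
  have hIntF : ∀ x : E, (∫⁻ y, F x y) ≠ ⊤ := by
    intro x
    apply ne_top_of_le_ne_top _ (upper x)
    exact ENNReal.mul_ne_top
      (ENNReal.add_ne_top.mpr ⟨ENNReal.mul_ne_top ENNReal.ofReal_ne_top hκtop,
        ENNReal.mul_ne_top ENNReal.ofReal_ne_top hItop⟩) ENNReal.ofReal_ne_top
  have hrepr : ∀ x : E, (∫ y, ‖x - y‖ ^ (-lam) * (1 + ‖y‖ ^ 2) ^ (-θ / 2)) =
      (∫⁻ y, F x y).toReal := by
    intro x
    rw [integral_eq_lintegral_of_nonneg_ae (ae_of_all _ (hnonneg x))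
      (Measurable.aestronglyMeasurable (by fun_prop))]
  -- lower bound for the lintegral
  set c0 : ℝ := (2:ℝ) ^ (-θ/2) * ((2:ℝ) ^ (-lam/2)) * vB.toReal with hc0
  have hvBr : 0 < vB.toReal := ENNReal.toReal_pos hvBpos.ne' hvBtop
  have hc0pos : 0 < c0 := by positivity
  have lower : ∀ x : E, ENNReal.ofReal (c0 * (1 + ‖x‖ ^ 2) ^ (-lam / 2)) ≤ ∫⁻ y, F x y := by
    intro x
    have hx1 : (0:ℝ) < 1 + ‖x‖ := by positivity
    have hpt : ∀ y ∈ ball (0:E) 1 \ {x},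
        ENNReal.ofReal ((2:ℝ)^(-θ/2) * (1 + ‖x‖) ^ (-lam)) ≤ F x y := by
      intro y hy
      obtain ⟨hy1, hy2⟩ := hy
      rw [mem_ball, dist_eq_norm, sub_zero] at hy1
      have hxy0 : 0 < ‖x - y‖ := by
        rw [norm_pos_iff, sub_ne_zero]
        exact fun hc => hy2 (mem_singleton_iff.mpr hc.symm)
      apply ENNReal.ofReal_le_ofReal
      rw [mul_comm ((2:ℝ)^(-θ/2)) _]
      apply mul_le_mul
      · apply rpow_le_rpow_of_nonpos hxy0 _ (by linarith)
        calc ‖x - y‖ ≤ ‖x‖ + ‖y‖ := norm_sub_le x y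
          _ ≤ 1 + ‖x‖ := by linarith
      · have hb2 : 1 + ‖y‖ ^ 2 ≤ 2 := by nlinarith [norm_nonneg y]
        have := rpow_le_rpow_of_nonpos (by positivity : (0:ℝ) < 1 + ‖y‖ ^ 2) hb2
          (by linarith : -θ/2 ≤ 0)
        convert this using 2 <;> ring
      · positivity
      · positivity
    calc ENNReal.ofReal (c0 * (1 + ‖x‖ ^ 2) ^ (-lam / 2))
        ≤ ENNReal.ofReal ((2:ℝ)^(-θ/2) * (1 + ‖x‖) ^ (-lam)) * vB := by
          rw [hc0, show (2:ℝ)^(-θ/2) * ((2:ℝ)^(-lam/2)) * vB.toReal * (1 + ‖x‖^2) ^ (-lam/2)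
            = ((2:ℝ)^(-θ/2) * ((2:ℝ)^(-lam/2) * (1 + ‖x‖^2) ^ (-lam/2))) * vB.toReal by ring,
            ENNReal.ofReal_mul (by positivity), ENNReal.ofReal_toReal hvBtop]
          apply mul_le_mul_left
          apply ENNReal.ofReal_le_ofReal
          exact mul_le_mul_of_nonneg_left (hbr2 x) (by positivity)
      _ = ∫⁻ _ in ball (0:E) 1 \ {x},
            ENNReal.ofReal ((2:ℝ)^(-θ/2) * (1 + ‖x‖) ^ (-lam)) := by
          rw [setLIntegral_const, measure_diff_null (measure_singleton x)]
      _ ≤ ∫⁻ y in ball (0:E) 1 \ {x}, F x y := setLIntegral_mono (hFmeas x) hpt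
      _ ≤ ∫⁻ y, F x y := setLIntegral_le_lintegral _ _
  -- conclusion
  refine ⟨c0, (ENNReal.ofReal A' * κ + ENNReal.ofReal ((2:ℝ)^lam) * I).toReal + 1, hc0pos,
    add_pos_of_nonneg_of_pos ENNReal.toReal_nonneg one_pos, fun x => ?_⟩
  set 𝒞 := ENNReal.ofReal A' * κ + ENNReal.ofReal ((2:ℝ)^lam) * I with h𝒞
  have h𝒞top : 𝒞 ≠ ⊤ :=
    ENNReal.add_ne_top.mpr ⟨ENNReal.mul_ne_top ENNReal.ofReal_ne_top hκtop,
      ENNReal.mul_ne_top ENNReal.ofReal_ne_top hItop⟩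
  constructor
  · rw [hrepr x]
    calc c0 * (1 + ‖x‖ ^ 2) ^ (-lam / 2)
        = (ENNReal.ofReal (c0 * (1 + ‖x‖ ^ 2) ^ (-lam / 2))).toReal :=
          (ENNReal.toReal_ofReal (by positivity)).symm
      _ ≤ (∫⁻ y, F x y).toReal := ENNReal.toReal_mono (hIntF x) (lower x)
  · rw [hrepr x]
    apply ENNReal.toReal_le_of_le_ofReal (by positivity)
    calc ∫⁻ y, F x y ≤ 𝒞 * ENNReal.ofReal ((1 + ‖x‖ ^ 2) ^ (-lam / 2)) := upper x
      _ ≤ ENNReal.ofReal (𝒞.toReal + 1) * ENNReal.ofReal ((1 + ‖x‖ ^ 2) ^ (-lam / 2)) := by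
          apply mul_le_mul_left
          conv_lhs => rw [← ENNReal.ofReal_toReal h𝒞top]
          exact ENNReal.ofReal_le_ofReal (by linarith)
      _ = ENNReal.ofReal ((𝒞.toReal + 1) * (1 + ‖x‖ ^ 2) ^ (-lam / 2)) :=
          (ENNReal.ofReal_mul (by positivity)).symm
end

section
/- Strauss radial lemma: there is a constant C = C(N) such that for every radially symmetric g ∈ Ḣ¹(ℝ^N) (N ≥ 3) and every r > 0, |g(r)| ≤ C ‖g‖_{Ḣ¹(|x| ≥ r)} · r^{−(N−2)/2}, where g(r) denotes the value of g on the sphere of radius r. -/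
/-!
Along the ray through `x`, the fundamental theorem of calculus and the decay of `g` at infinity
give `|g x| ≤ ∫_r^∞ F`, where `r = ‖x‖` and `F s = ‖Dg (s • e)‖` for the unit vector `e = x / r`.
Since `g` is radial, a reflection exchanging any two points of equal norm shows that `‖Dg y‖`
equals `F ‖y‖`, so in polar coordinates `∫_{‖y‖ ≥ r} ‖Dg‖² = N |B₁| ∫_r^∞ s^(N-1) F(s)² ds`.
Cauchy–Schwarz with the weights `s^(∓(N-1)/2)` and `∫_r^∞ s^(1-N) ds = r^(2-N) / (N-2)` then give
the bound with `C = ((N-2) N |B₁|)^(-1/2)`.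
-/

open MeasureTheory Filter Set Metric Topology Module

section Radial

variable {E G : Type*} [NormedAddCommGroup E] [InnerProductSpace ℝ E]
  [NormedAddCommGroup G] [NormedSpace ℝ G] {g : E → G}

/- A reflection `R` maps `y` to `z` and fixes `g`, so `fderiv g y = fderiv g z ∘ R`; this needs
no differentiability, since `fderiv` commutes with composition by a linear equivalence. -/
theorem norm_fderiv_eq_of_norm_eq (hg : ∀ x y, ‖x‖ = ‖y‖ → g x = g y) {y z : E}
    (h : ‖y‖ = ‖z‖) : ‖fderiv ℝ g y‖ = ‖fderiv ℝ g z‖ := by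
  set R := Submodule.reflection (ℝ ∙ (y - z))ᗮ
  have hgR : g ∘ R = g := funext fun w => hg _ _ (R.norm_map w)
  have := R.toContinuousLinearEquiv.comp_right_fderiv (f := g) (x := y)
  simp only [LinearIsometryEquiv.coe_toContinuousLinearEquiv, hgR] at this
  rw [this, Submodule.reflection_sub h]
  exact ContinuousLinearMap.opNorm_comp_linearIsometryEquiv _ R

theorem sq_norm_fderiv_eq_of_radial (hg : ∀ x y, ‖x‖ = ‖y‖ → g x = g y) {e : E} (he : ‖e‖ = 1) :
    (fun y => ‖fderiv ℝ g y‖ ^ 2) = fun y => ‖fderiv ℝ g (‖y‖ • e)‖ ^ 2 :=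
  funext fun y => by
    rw [norm_fderiv_eq_of_norm_eq hg (z := ‖y‖ • e) (by rw [norm_smul, he, mul_one, norm_norm])]

end Radial

theorem abs_le_setIntegral_Ioi_of_tendsto_zero {φ F : ℝ → ℝ} {r : ℝ}
    (hφ : ∀ s ∈ Ici r, DifferentiableAt ℝ φ s) (hφF : ∀ s ∈ Ioi r, |deriv φ s| ≤ F s)
    (hF : IntegrableOn F (Ioi r)) (hlim : Tendsto φ atTop (𝓝 0)) :
    |φ r| ≤ ∫ s in Ioi r, F s := by
  have hbound : ∀ᵐ s ∂volume.restrict (Ioi r), ‖deriv φ s‖ ≤ F s :=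
    (ae_restrict_mem measurableSet_Ioi).mono hφF
  have hFTC : ∫ s in Ioi r, deriv φ s = 0 - φ r :=
    integral_Ioi_of_hasDerivAt_of_tendsto' (fun s hs => (hφ s hs).hasDerivAt)
      (hF.mono' (aestronglyMeasurable_deriv _ _) hbound) hlim
  rw [zero_sub] at hFTC
  rw [← abs_neg, ← hFTC, ← Real.norm_eq_abs]
  exact norm_integral_le_of_norm_le hF hbound

section Ray

variable {E : Type*} [NormedAddCommGroup E] [NormedSpace ℝ E] {g : E → ℝ} {e : E}

theorem abs_deriv_comp_smul_le {s : ℝ} (hg : DifferentiableAt ℝ g (s • e)) (he : ‖e‖ = 1) :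
    |deriv (fun t : ℝ => g (t • e)) s| ≤ ‖fderiv ℝ g (s • e)‖ := by
  have hray : HasDerivAt (fun t : ℝ => t • e) e s := by
    simpa using (hasDerivAt_id s).smul_const e
  have hderiv : HasDerivAt (fun t : ℝ => g (t • e)) (fderiv ℝ g (s • e) e) s :=
    hg.hasFDerivAt.comp_hasDerivAt s hray
  rw [hderiv.deriv, ← Real.norm_eq_abs]
  simpa [he] using (fderiv ℝ g (s • e)).le_opNorm e

theorem tendsto_comp_smul_atTop [ProperSpace E] (hlim : Tendsto g (cocompact E) (𝓝 0))
    (he : e ≠ 0) : Tendsto (fun t : ℝ => g (t • e)) atTop (𝓝 0) := by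
  refine hlim.comp ?_
  rw [← cobounded_eq_cocompact, ← tendsto_norm_atTop_iff_cobounded]
  simp_rw [norm_smul, Real.norm_eq_abs]
  exact tendsto_abs_atTop_atTop.atTop_mul_const (norm_pos_iff.2 he)

theorem abs_le_setIntegral_norm_fderiv_smul [ProperSpace E] (hg : Differentiable ℝ g)
    (hlim : Tendsto g (cocompact E) (𝓝 0)) (he : ‖e‖ = 1) {r : ℝ}
    (hint : IntegrableOn (fun s => ‖fderiv ℝ g (s • e)‖) (Ioi r)) :
    |g (r • e)| ≤ ∫ s in Ioi r, ‖fderiv ℝ g (s • e)‖ :=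
  abs_le_setIntegral_Ioi_of_tendsto_zero (φ := fun t => g (t • e))
    (fun s _ => (hg _).comp s (differentiableAt_id.smul_const e))
    (fun _ _ => abs_deriv_comp_smul_le (hg _) he) hint
    (tendsto_comp_smul_atTop hlim (norm_ne_zero_iff.1 (he ▸ one_ne_zero)))

end Ray

section HalfLine

variable {F : ℝ → ℝ} {r a : ℝ}

theorem memLp_two_rpow_neg_half_Ioi (hr : 0 < r) (ha : 1 < a) :
    MemLp (fun s : ℝ => s ^ (-a / 2)) 2 (volume.restrict (Ioi r)) := by
  have hmeas : AEStronglyMeasurable (fun s : ℝ => s ^ (-a / 2)) (volume.restrict (Ioi r)) :=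
    (measurable_id.pow_const _).aestronglyMeasurable
  rw [memLp_two_iff_integrable_sq hmeas]
  refine (integrableOn_Ioi_rpow_of_lt (by linarith : -a < -1) hr).congr_fun (fun s hs => ?_)
    measurableSet_Ioi
  rw [← Real.rpow_mul_natCast (hr.trans hs).le]
  ring_nf

theorem memLp_two_rpow_half_mul_Ioi (hr : 0 ≤ r)
    (hF : AEStronglyMeasurable F (volume.restrict (Ioi r)))
    (hint : IntegrableOn (fun s => s ^ a * F s ^ 2) (Ioi r)) :
    MemLp (fun s => s ^ (a / 2) * F s) 2 (volume.restrict (Ioi r)) := by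
  have hmeas : AEStronglyMeasurable (fun s : ℝ => s ^ (a / 2) * F s) (volume.restrict (Ioi r)) :=
    (measurable_id.pow_const _).aestronglyMeasurable.mul hF
  rw [memLp_two_iff_integrable_sq hmeas]
  refine hint.congr_fun (fun s hs => ?_) measurableSet_Ioi
  rw [mul_pow, ← Real.rpow_mul_natCast (hr.trans_lt hs).le]
  ring_nf

theorem rpow_neg_half_mul_rpow_half_mul {s : ℝ} (hs : 0 < s) (a c : ℝ) :
    s ^ (-a / 2) * (s ^ (a / 2) * c) = c := by
  rw [← mul_assoc, ← Real.rpow_add hs, neg_div, neg_add_cancel, Real.rpow_zero, one_mul]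

theorem integrableOn_Ioi_of_integrableOn_rpow_mul_sq (hr : 0 < r) (ha : 1 < a)
    (hF : AEStronglyMeasurable F (volume.restrict (Ioi r)))
    (hint : IntegrableOn (fun s => s ^ a * F s ^ 2) (Ioi r)) :
    IntegrableOn F (Ioi r) := by
  have : IntegrableOn _ (Ioi r) := (memLp_two_rpow_neg_half_Ioi hr ha).integrable_mul
    (memLp_two_rpow_half_mul_Ioi hr.le hF hint) (p := 2) (q := 2)
  exact this.congr_fun (fun s hs => rpow_neg_half_mul_rpow_half_mul (hr.trans hs) a _)
    measurableSet_Ioi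

/- Cauchy–Schwarz for `F = s ^ (-a / 2) * (s ^ (a / 2) * F)`. -/
theorem setIntegral_Ioi_le_sqrt_mul_sqrt (hr : 0 < r) (ha : 1 < a)
    (hF : AEStronglyMeasurable F (volume.restrict (Ioi r)))
    (hint : IntegrableOn (fun s => s ^ a * F s ^ 2) (Ioi r)) :
    ∫ s in Ioi r, F s ≤ √(r ^ (1 - a) / (a - 1)) * √(∫ s in Ioi r, s ^ a * F s ^ 2) := by
  have hHolder := integral_mul_norm_le_Lp_mul_Lq Real.HolderConjugate.two_two
    (by simpa using memLp_two_rpow_neg_half_Ioi hr ha)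
    (by simpa using memLp_two_rpow_half_mul_Ioi hr.le hF hint)
  have hweight : ∫ s in Ioi r, ‖s ^ (-a / 2)‖ ^ (2 : ℝ) = r ^ (1 - a) / (a - 1) := by
    rw [setIntegral_congr_fun measurableSet_Ioi (g := fun s => s ^ (-a)) fun s hs => by
        rw [Real.norm_of_nonneg (Real.rpow_nonneg (hr.trans hs).le _),
          ← Real.rpow_mul (hr.trans hs).le]
        ring_nf,
      integral_Ioi_rpow_of_lt (by linarith) hr]
    rw [neg_div, ← div_neg]
    ring_nf
  have hF2 : ∫ s in Ioi r, ‖s ^ (a / 2) * F s‖ ^ (2 : ℝ) = ∫ s in Ioi r, s ^ a * F s ^ 2 := by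
    refine setIntegral_congr_fun measurableSet_Ioi fun s hs => ?_
    rw [Real.rpow_two, norm_mul, mul_pow,
      Real.norm_of_nonneg (Real.rpow_nonneg (hr.trans hs).le _),
      ← Real.rpow_mul_natCast (hr.trans hs).le, Real.norm_eq_abs, sq_abs]
    ring_nf
  calc ∫ s in Ioi r, F s ≤ ∫ s in Ioi r, ‖F s‖ :=
        (le_abs_self _).trans (norm_integral_le_integral_norm F)
    _ = ∫ s in Ioi r, ‖s ^ (-a / 2)‖ * ‖s ^ (a / 2) * F s‖ :=
        setIntegral_congr_fun measurableSet_Ioi fun s hs => by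
          rw [← norm_mul, rpow_neg_half_mul_rpow_half_mul (hr.trans hs)]
    _ ≤ _ := hHolder
    _ = _ := by rw [hweight, hF2, Real.sqrt_eq_rpow, Real.sqrt_eq_rpow]

end HalfLine

theorem indicator_norm_ge_eq {E F : Type*} [Norm E] [Zero F] (f : ℝ → F) (r : ℝ) :
    {x : E | r ≤ ‖x‖}.indicator (fun x => f ‖x‖) = fun x => (Ici r).indicator f ‖x‖ :=
  funext fun _ => indicator_comp_right (s := Ici r) norm

theorem smul_indicator_Ici_eq {F : Type*} [NormedAddCommGroup F] [NormedSpace ℝ F]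
    (f : ℝ → F) (n : ℕ) (r : ℝ) :
    (fun s : ℝ => s ^ n • (Ici r).indicator f s) = (Ici r).indicator (fun s => s ^ n • f s) :=
  funext fun s => (indicator_smul_apply _ _ _ s).symm

theorem pow_sub_one_eq_rpow {n : ℕ} (hn : 1 ≤ n) (s : ℝ) : s ^ (n - 1) = s ^ ((n : ℝ) - 1) := by
  rw [← Real.rpow_natCast, Nat.cast_sub hn, Nat.cast_one]

section Polar

variable {E F : Type*} [NormedAddCommGroup E] [NormedSpace ℝ E] [Nontrivial E]
  [FiniteDimensional ℝ E] [MeasurableSpace E] [BorelSpace E] (μ : Measure E) [μ.IsAddHaarMeasure]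
  [NormedAddCommGroup F] [NormedSpace ℝ F] {r : ℝ}

theorem integrableOn_fun_norm_addHaar_exterior {f : ℝ → F} (hr : 0 < r) :
    IntegrableOn (fun x : E => f ‖x‖) {x | r ≤ ‖x‖} μ ↔
      IntegrableOn (fun s => s ^ (finrank ℝ E - 1) • f s) (Ioi r) := by
  rw [← integrable_indicator_iff (measurableSet_le measurable_const measurable_norm),
    indicator_norm_ge_eq, integrable_fun_norm_addHaar μ, smul_indicator_Ici_eq, IntegrableOn,
    integrable_indicator_iff measurableSet_Ici, IntegrableOn,
    Measure.restrict_restrict measurableSet_Ici, inter_eq_left.2 (Ici_subset_Ioi.2 hr),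
    ← IntegrableOn, integrableOn_Ici_iff_integrableOn_Ioi]

theorem setIntegral_fun_norm_addHaar_exterior (f : ℝ → F) (hr : 0 < r) :
    ∫ x in {x | r ≤ ‖x‖}, f ‖x‖ ∂μ =
      finrank ℝ E • μ.real (ball 0 1) • ∫ s in Ioi r, s ^ (finrank ℝ E - 1) • f s := by
  rw [← integral_indicator (measurableSet_le measurable_const measurable_norm),
    indicator_norm_ge_eq, integral_fun_norm_addHaar μ, smul_indicator_Ici_eq,
    integral_indicator measurableSet_Ici, Measure.restrict_restrict measurableSet_Ici,
    inter_eq_left.2 (Ici_subset_Ioi.2 hr), integral_Ici_eq_integral_Ioi]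

end Polar

section RadialPolar

variable {E : Type*} [NormedAddCommGroup E] [InnerProductSpace ℝ E] [Nontrivial E]
  [FiniteDimensional ℝ E] [MeasurableSpace E] [BorelSpace E] (μ : Measure E) [μ.IsAddHaarMeasure]
  {g : E → ℝ} {e : E} {r : ℝ}

theorem integrableOn_rpow_mul_sq_norm_fderiv_smul (hrad : ∀ x y, ‖x‖ = ‖y‖ → g x = g y)
    (he : ‖e‖ = 1) (hr : 0 < r)
    (hint : IntegrableOn (fun y => ‖fderiv ℝ g y‖ ^ 2) {y | r ≤ ‖y‖} μ) :
    IntegrableOn (fun s => s ^ ((finrank ℝ E : ℝ) - 1) * ‖fderiv ℝ g (s • e)‖ ^ 2) (Ioi r) := by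
  rw [sq_norm_fderiv_eq_of_radial hrad he,
    integrableOn_fun_norm_addHaar_exterior μ (f := fun s => ‖fderiv ℝ g (s • e)‖ ^ 2) hr] at hint
  simpa only [smul_eq_mul, pow_sub_one_eq_rpow finrank_pos] using hint

theorem setIntegral_sq_norm_fderiv_exterior (hrad : ∀ x y, ‖x‖ = ‖y‖ → g x = g y)
    (he : ‖e‖ = 1) (hr : 0 < r) :
    ∫ y in {y | r ≤ ‖y‖}, ‖fderiv ℝ g y‖ ^ 2 ∂μ = finrank ℝ E * μ.real (ball 0 1) *
      ∫ s in Ioi r, s ^ ((finrank ℝ E : ℝ) - 1) * ‖fderiv ℝ g (s • e)‖ ^ 2 := by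
  rw [sq_norm_fderiv_eq_of_radial hrad he,
    setIntegral_fun_norm_addHaar_exterior μ (fun s => ‖fderiv ℝ g (s • e)‖ ^ 2) hr]
  simp only [nsmul_eq_mul, smul_eq_mul, pow_sub_one_eq_rpow finrank_pos, mul_assoc]

end RadialPolar

theorem measureReal_ball_pos {X : Type*} [PseudoMetricSpace X] [ProperSpace X] [MeasurableSpace X]
    (μ : Measure X) [IsFiniteMeasureOnCompacts μ] [μ.IsOpenPosMeasure] (x : X) {ε : ℝ}
    (hε : 0 < ε) : 0 < μ.real (ball x ε) :=
  ENNReal.toReal_pos (measure_ball_pos μ x hε).ne' measure_ball_lt_top.ne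

theorem sqrt_rpow_div_mul_sqrt_eq {r n V J : ℝ} (hr : 0 < r) (hn : 2 < n) (hV : 0 < V) :
    √(r ^ (1 - (n - 1)) / (n - 1 - 1)) * √J =
      √((n - 2)⁻¹ * (n * V)⁻¹) * √(n * V * J) * r ^ (-(n - 2) / 2) := by
  have hn2 : n - 2 ≠ 0 := by linarith
  have hn11 : n - 1 - 1 = n - 2 := by ring
  rw [← Real.sqrt_mul (div_nonneg (by positivity) (by linarith)),
    ← Real.sqrt_mul (mul_nonneg (inv_nonneg.2 (by linarith)) (by positivity)),
    ← Real.sqrt_sq (Real.rpow_nonneg hr.le (-(n - 2) / 2)), ← Real.sqrt_mul' _ (sq_nonneg _),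
    ← Real.rpow_mul_natCast hr.le, hn11]
  congr 1
  field_simp
  ring_nf

section Strauss

variable {E : Type*} [NormedAddCommGroup E] [InnerProductSpace ℝ E] [FiniteDimensional ℝ E]
  [MeasurableSpace E] [BorelSpace E] (μ : Measure E) [μ.IsAddHaarMeasure]

theorem abs_le_sqrt_setIntegral_sq_norm_fderiv_mul_rpow (hd : 3 ≤ finrank ℝ E) {g : E → ℝ}
    (hg : Differentiable ℝ g) (hrad : ∀ x y, ‖x‖ = ‖y‖ → g x = g y)
    (hlim : Tendsto g (cocompact E) (𝓝 0)) {x : E} (hx : x ≠ 0)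
    (hint : IntegrableOn (fun y => ‖fderiv ℝ g y‖ ^ 2) {y | ‖x‖ ≤ ‖y‖} μ) :
    |g x| ≤ √(((finrank ℝ E : ℝ) - 2)⁻¹ * ((finrank ℝ E : ℝ) * μ.real (ball 0 1))⁻¹) *
      √(∫ y in {y | ‖x‖ ≤ ‖y‖}, ‖fderiv ℝ g y‖ ^ 2 ∂μ) * ‖x‖ ^ (-((finrank ℝ E : ℝ) - 2) / 2) := by
  have : Nontrivial E := nontrivial_of_ne x 0 hx
  set r := ‖x‖
  have hr : 0 < r := norm_pos_iff.2 hx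
  set e := r⁻¹ • x
  have he : ‖e‖ = 1 := by rw [norm_smul, norm_inv, norm_norm, inv_mul_cancel₀ hr.ne']
  have hxe : r • e = x := by rw [smul_smul, mul_inv_cancel₀ hr.ne', one_smul]
  have hmeas :
      AEStronglyMeasurable (fun s : ℝ => ‖fderiv ℝ g (s • e)‖) (volume.restrict (Ioi r)) :=
    ((measurable_fderiv ℝ g).comp (measurable_id.smul_const e)).norm.aestronglyMeasurable
  have hdim : (3 : ℝ) ≤ finrank ℝ E := by exact_mod_cast hd
  have ha : 1 < (finrank ℝ E : ℝ) - 1 := by linarith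
  have hJint := integrableOn_rpow_mul_sq_norm_fderiv_smul μ hrad he hr hint
  have hFTC := abs_le_setIntegral_norm_fderiv_smul hg hlim he
    (integrableOn_Ioi_of_integrableOn_rpow_mul_sq hr ha hmeas hJint)
  rw [hxe] at hFTC
  rw [setIntegral_sq_norm_fderiv_exterior μ hrad he hr,
    ← sqrt_rpow_div_mul_sqrt_eq (V := μ.real (ball 0 1)) hr (by linarith)
      (measureReal_ball_pos μ 0 one_pos)]
  exact hFTC.trans (setIntegral_Ioi_le_sqrt_mul_sqrt hr ha hmeas hJint)

end Strauss

/-- Strauss radial lemma: there is `C = C(N)` such that every radially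
symmetric `Ḣ¹` function `g` on `ℝ^N` (`N ≥ 3`) satisfies, for every `x ≠ 0`,
`|g(x)| ≤ C ‖∇g‖_{L²(|y| ≥ |x|)} |x|^{−(N−2)/2}`. -/
theorem stmt13 (N : ℕ) (hN : 3 ≤ N) :
    ∃ C : ℝ, 0 < C ∧ ∀ g : EuclideanSpace ℝ (Fin N) → ℝ,
      ContDiff ℝ 1 g →
      (∀ x y, ‖x‖ = ‖y‖ → g x = g y) →
      Tendsto g (cocompact (EuclideanSpace ℝ (Fin N))) (nhds 0) →
      Integrable (fun y => ‖fderiv ℝ g y‖ ^ 2) →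
      ∀ x : EuclideanSpace ℝ (Fin N), x ≠ 0 →
        |g x| ≤ C * (∫ y in {y : EuclideanSpace ℝ (Fin N) | ‖x‖ ≤ ‖y‖},
            ‖fderiv ℝ g y‖ ^ 2) ^ ((1 : ℝ) / 2) * ‖x‖ ^ (-((N : ℝ) - 2) / 2) := by
  set V := (volume : Measure (EuclideanSpace ℝ (Fin N))).real (ball 0 1)
  have hV : 0 < V := measureReal_ball_pos volume 0 one_pos
  have hN2 : (2 : ℝ) < N := by exact_mod_cast hN
  refine ⟨√(((N : ℝ) - 2)⁻¹ * ((N : ℝ) * V)⁻¹),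
    Real.sqrt_pos.2 (mul_pos (inv_pos.2 (by linarith)) (by positivity)),
    fun g hg hrad hlim hint x hx => ?_⟩
  have := abs_le_sqrt_setIntegral_sq_norm_fderiv_mul_rpow volume
    (by rwa [finrank_euclideanSpace_fin]) (hg.differentiable one_ne_zero) hrad hlim hx
    hint.integrableOn
  rwa [finrank_euclideanSpace_fin, Real.sqrt_eq_rpow (∫ _ in _, _ ∂_)] at this
end
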